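/- Let S be a subproblem decomposition of a CSP instance P = ⟨V, C⟩, and let Q_S be the instance with variable set V containing, for each T ∈ S, a constraint with scope V_T and relation sol(T). For T ∈ S let iv(T) = ⋃_{T' ∈ S, T' ≠ T} (V_T ∩ V_{T'}), and assume every T ∈ S with iv(T) = ∅ has sol(T) ≠ ∅. Let (Q_S)_CL be the classic instance whose constraints are the induced table constraints ic(T) for T ∈ S. Then (Q_S)_CL has the same hypergraph as the decomposition S (one hyperedge V_T per T ∈ S), and (Q_S)_CL has a solution if and only if P has a solution. -/

import Mathlib

/-! Basic framework for CSP instances with possibly implicitly represented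
(global) constraints, following the paper's definitions. -/

variable {ι : Type*} {α : Type*}

/-- The restriction `θ|_X` of an assignment `θ` of the variables `W`
to a subset `X ⊆ W`. -/
def restrictA {W X : Set ι} (h : X ⊆ W) (θ : W → α) : X → α :=
  fun x => θ ⟨x.1, h x.2⟩

/-- A constraint is given by its scope together with its relation, a set of
assignments of the scope (the satisfying assignments). -/
structure Constraint (ι : Type*) (α : Type*) where
  scope : Set ι
  rel : Set (scope → α)

/-- A CSP instance: a finite set of variables, a finite nonempty domain for each
variable, and a finite set of constraints whose scopes are sets of variables of
the instance, such that every variable occurs in the scope of some constraint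
and all relations consist of domain-respecting assignments. -/
structure CSP (ι : Type*) (α : Type*) where
  vars : Set ι
  dom : ι → Set α
  cons : Set (Constraint ι α)
  vars_finite : vars.Finite
  cons_finite : cons.Finite
  dom_finite : ∀ v ∈ vars, (dom v).Finite
  dom_nonempty : ∀ v ∈ vars, (dom v).Nonempty
  scope_sub : ∀ c ∈ cons, c.scope ⊆ vars
  cover : ∀ v ∈ vars, ∃ c ∈ cons, v ∈ c.scope
  rel_dom : ∀ c ∈ cons, ∀ θ ∈ c.rel, ∀ v, θ v ∈ dom v.1

namespace CSP

/-- `θ` is an assignment (it respects the domains). -/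
def IsAssignment (P : CSP ι α) {W : Set ι} (θ : W → α) : Prop :=
  ∀ v, θ v ∈ P.dom v.1

/-- `θ` satisfies every constraint of `P`. -/
def Satisfies (P : CSP ι α) (θ : P.vars → α) : Prop :=
  ∀ c (hc : c ∈ P.cons), restrictA (P.scope_sub c hc) θ ∈ c.rel

/-- The set of solutions of `P`. -/
def sol (P : CSP ι α) : Set (P.vars → α) :=
  { θ | P.IsAssignment θ ∧ P.Satisfies θ }

end CSP

/-- The projection of a constraint onto a set of variables `X`
(scope `S(c) ∩ X`, relation the restrictions of satisfying assignments). -/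
def Constraint.proj (c : Constraint ι α) (X : Set ι) : Constraint ι α where
  scope := c.scope ∩ X
  rel := { μ | ∃ θ ∈ c.rel, restrictA Set.inter_subset_left θ = μ }

/-- The projected instance `pj_X(P)`. -/
def CSP.proj (P : CSP ι α) (X : Set ι) (hX : X ⊆ P.vars) : CSP ι α where
  vars := X
  dom := P.dom
  cons := (fun c => c.proj X) '' { c ∈ P.cons | (c.scope ∩ X).Nonempty }
  vars_finite := P.vars_finite.subset hX
  cons_finite := (P.cons_finite.subset (Set.sep_subset _ _)).image _
  dom_finite := fun v hv => P.dom_finite v (hX hv)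
  dom_nonempty := fun v hv => P.dom_nonempty v (hX hv)
  scope_sub := by
    rintro c' ⟨c, ⟨hc, hne⟩, rfl⟩
    exact Set.inter_subset_right
  cover := by
    intro v hv
    obtain ⟨c, hc, hvc⟩ := P.cover v (hX hv)
    exact ⟨c.proj X, ⟨c, ⟨hc, ⟨v, hvc, hv⟩⟩, rfl⟩, ⟨hvc, hv⟩⟩
  rel_dom := by
    rintro c' ⟨c, ⟨hc, hne⟩, rfl⟩ μ ⟨θ, hθ, rfl⟩ v
    exact P.rel_dom c hc θ hθ ⟨v.1, v.2.1⟩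

/-- The set of variables of a set of constraints: the union of their scopes. -/
def subVars (s : Set (Constraint ι α)) : Set ι := ⋃ c ∈ s, c.scope

lemma subVars_subset (P : CSP ι α) {s : Set (Constraint ι α)} (hs : s ⊆ P.cons) :
    subVars s ⊆ P.vars :=
  Set.iUnion₂_subset fun c hc => P.scope_sub c (hs hc)

/-- The subproblem (subinstance) of `P` given by a subset `s` of its
constraints; its variable set is the union of the scopes of the
constraints in `s`. -/
def CSP.sub (P : CSP ι α) (s : Set (Constraint ι α)) (hs : s ⊆ P.cons) : CSP ι α where
  vars := subVars s
  dom := P.dom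
  cons := s
  vars_finite := P.vars_finite.subset (subVars_subset P hs)
  cons_finite := P.cons_finite.subset hs
  dom_finite := fun v hv => P.dom_finite v (subVars_subset P hs hv)
  dom_nonempty := fun v hv => P.dom_nonempty v (subVars_subset P hs hv)
  scope_sub := fun c hc => Set.subset_biUnion_of_mem hc
  cover := fun v hv => by simpa [subVars] using hv
  rel_dom := fun c hc => P.rel_dom c (hs hc)

/-- The constraint corresponding to a subproblem `T` of `P` given by a subset
`s ⊆ C` of constraints: scope `V_T` and relation `sol(T)`. -/
def CSP.subC (P : CSP ι α) (s : Set (Constraint ι α)) (hs : s ⊆ P.cons) :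
    Constraint ι α where
  scope := subVars s
  rel := (P.sub s hs).sol

/-- The instance `Q_S` associated with a subproblem decomposition `S` of `P`:
variable set `V` and, for each subproblem `T ∈ S`, one constraint with scope
`V_T` and relation `sol(T)`. -/
def CSP.QS (P : CSP ι α) (S : Set (Set (Constraint ι α)))
    (hS : ∀ s ∈ S, s ⊆ P.cons) (hcov : ∀ c ∈ P.cons, ∃ s ∈ S, c ∈ s) :
    CSP ι α where
  vars := P.vars
  dom := P.dom
  cons := Set.range (fun s : S => P.subC s.1 (hS s.1 s.2))
  vars_finite := P.vars_finite
  cons_finite := by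
    have hSfin : S.Finite :=
      P.cons_finite.finite_subsets.subset (fun s hs => hS s hs)
    haveI := hSfin.to_subtype
    exact Set.finite_range _
  dom_finite := P.dom_finite
  dom_nonempty := P.dom_nonempty
  scope_sub := by
    rintro c ⟨⟨s, hs⟩, rfl⟩
    exact subVars_subset P (hS s hs)
  cover := by
    intro v hv
    obtain ⟨c, hc, hvc⟩ := P.cover v hv
    obtain ⟨s, hsS, hcs⟩ := hcov c hc
    exact ⟨P.subC s (hS s hsS), ⟨⟨s, hsS⟩, rfl⟩,
      Set.subset_biUnion_of_mem hcs hvc⟩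
  rel_dom := by
    rintro c ⟨⟨s, hs⟩, rfl⟩ θ hθ v
    exact hθ.1 v

/-- The hypergraph of a CSP instance: vertex set and set of scopes. -/
def CSP.hyp (P : CSP ι α) : Set ι × Set (Set ι) :=
  (P.vars, Constraint.scope '' P.cons)

/-- The set of intersection variables `iv(T)` of the subproblem given by
`s` in the decomposition `S`: the variables of `T` shared with some other
subproblem of `S`. -/
def ivS (S : Set (Set (Constraint ι α))) (s : Set (Constraint ι α)) : Set ι :=
  ⋃ s' ∈ S \ {s}, subVars s ∩ subVars s'

lemma ivS_subset_subVars (S : Set (Set (Constraint ι α)))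
    (s : Set (Constraint ι α)) : ivS S s ⊆ subVars s :=
  Set.iUnion₂_subset fun _ _ => Set.inter_subset_left

lemma ivS_subset_vars (P : CSP ι α) {S : Set (Set (Constraint ι α))}
    (hS : ∀ s ∈ S, s ⊆ P.cons) {s : Set (Constraint ι α)} (hs : s ∈ S) :
    ivS S s ⊆ P.vars :=
  (ivS_subset_subVars S s).trans (subVars_subset P (hS s hs))

open Classical in
/-- The table constraint `ic(T)` induced by the subproblem `T ∈ S` given by
`s`: scope `V_T` and relation `{θ ⊕ μ*_T : θ ∈ sol(pj_{iv(T)}(Q_S))}`, where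
`μ*_T` assigns the special value `star` to every variable of `V_T ∖ iv(T)`. -/
def icS (P : CSP ι α) (S : Set (Set (Constraint ι α)))
    (hS : ∀ s ∈ S, s ⊆ P.cons) (hcov : ∀ c ∈ P.cons, ∃ s ∈ S, c ∈ s)
    (star : α) (s : Set (Constraint ι α)) (hs : s ∈ S) : Constraint ι α where
  scope := subVars s
  rel := { μ | ∃ θ ∈ ((P.QS S hS hcov).proj (ivS S s)
        (ivS_subset_vars P hS hs)).sol,
      μ = fun v => if h : v.1 ∈ ivS S s then θ ⟨v.1, h⟩ else star }

open Classical in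
/-- The classic instance `(Q_S)_CL`: same variables as `P`, domains extended
by the special value `star`, and constraints the induced table constraints
`ic(T)` for `T ∈ S`. -/
def QSCL (P : CSP ι α) (S : Set (Set (Constraint ι α)))
    (hS : ∀ s ∈ S, s ⊆ P.cons) (hcov : ∀ c ∈ P.cons, ∃ s ∈ S, c ∈ s)
    (star : α) : CSP ι α where
  vars := P.vars
  dom := fun v => insert star (P.dom v)
  cons := Set.range (fun s : S => icS P S hS hcov star s.1 s.2)
  vars_finite := P.vars_finite
  cons_finite := by
    have hSfin : S.Finite :=
      P.cons_finite.finite_subsets.subset (fun s hs => hS s hs)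
    haveI := hSfin.to_subtype
    exact Set.finite_range _
  dom_finite := fun v hv => (P.dom_finite v hv).insert star
  dom_nonempty := fun v _ => ⟨star, Set.mem_insert _ _⟩
  scope_sub := by
    rintro c ⟨⟨s, hs⟩, rfl⟩
    exact subVars_subset P (hS s hs)
  cover := by
    intro v hv
    obtain ⟨c, hc, hvc⟩ := P.cover v hv
    obtain ⟨s, hsS, hcs⟩ := hcov c hc
    exact ⟨icS P S hS hcov star s hsS, ⟨⟨s, hsS⟩, rfl⟩,
      Set.subset_biUnion_of_mem hcs hvc⟩
  rel_dom := by
    rintro c ⟨⟨s, hs⟩, rfl⟩ μ ⟨θ, hθ, rfl⟩ v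
    dsimp only
    split
    · next h => exact Set.mem_insert_iff.mpr (Or.inr (hθ.1 ⟨v.1, h⟩))
    · exact Set.mem_insert _ _

section Aux

lemma mem_ivS' {S : Set (Set (Constraint ι α))} {s s' : Set (Constraint ι α)}
    (hs' : s' ∈ S) (hne : s' ≠ s) {v : ι} (h1 : v ∈ subVars s)
    (h2 : v ∈ subVars s') : v ∈ ivS S s :=
  Set.mem_biUnion (show s' ∈ S \ {s} from ⟨hs', hne⟩) ⟨h1, h2⟩

/-- restriction of a `P`-solution to a subproblem is a solution of it. -/
lemma sol_restrict (P : CSP ι α) {s : Set (Constraint ι α)} (hs : s ⊆ P.cons)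
    {θ : P.vars → α} (hθ : θ ∈ P.sol) :
    restrictA (subVars_subset P hs) θ ∈ (P.sub s hs).sol := by
  refine ⟨fun v => hθ.1 ⟨v.1, subVars_subset P hs v.2⟩, fun c hc => ?_⟩
  exact hθ.2 c (hs hc)

lemma sol_glue (P : CSP ι α) (S : Set (Set (Constraint ι α)))
    (hS : ∀ s ∈ S, s ⊆ P.cons) (hcov : ∀ c ∈ P.cons, ∃ s ∈ S, c ∈ s)
    (Sg : ∀ s (hs : s ∈ S), ↥(subVars s) → α)
    (hSgsol : ∀ s (hs : s ∈ S), Sg s hs ∈ (P.sub s (hS s hs)).sol)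
    (hSgphi : ∀ s (hs : s ∈ S) (v : ↥(subVars s)) (h : v.1 ∈ ivS S s)
      (t : Set (Constraint ι α)) (ht : t ∈ S) (hvt : v.1 ∈ subVars t)
      (h' : v.1 ∈ ivS S t), Sg s hs v = Sg t ht ⟨v.1, hvt⟩) :
    P.sol.Nonempty := by
  have hch : ∀ v : ↥(P.vars), ∃ s, ∃ hs : s ∈ S, v.1 ∈ subVars s := by
    intro v
    obtain ⟨c, hc, hvc⟩ := P.cover v.1 v.2
    obtain ⟨s, hsS, hcs⟩ := hcov c hc
    exact ⟨s, hsS, Set.subset_biUnion_of_mem hcs hvc⟩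
  choose sv hsv hvsv using hch
  refine ⟨fun v => Sg (sv v) (hsv v) ⟨v.1, hvsv v⟩, ?_, ?_⟩
  · intro v
    exact (hSgsol (sv v) (hsv v)).1 ⟨v.1, hvsv v⟩
  · intro c hc
    obtain ⟨s, hsS, hcs⟩ := hcov c hc
    have key : ∀ (v : ↥(P.vars)) (h : v.1 ∈ subVars s),
        Sg (sv v) (hsv v) ⟨v.1, hvsv v⟩ = Sg s hsS ⟨v.1, h⟩ := by
      intro v h
      by_cases heq : sv v = s
      · subst heq; rfl
      · have h1 : v.1 ∈ ivS S (sv v) :=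
          mem_ivS' hsS (fun e => heq e.symm) (hvsv v) h
        have h2 : v.1 ∈ ivS S s := mem_ivS' (hsv v) heq h (hvsv v)
        exact hSgphi (sv v) (hsv v) ⟨v.1, hvsv v⟩ h1 s hsS h h2
    have hsub := (hSgsol s hsS).2 c hcs
    have : restrictA (P.scope_sub c hc)
        (fun v : ↥(P.vars) => Sg (sv v) (hsv v) ⟨v.1, hvsv v⟩) =
        restrictA ((P.sub s (hS s hsS)).scope_sub c hcs) (Sg s hsS) := by
      funext w
      exact key ⟨w.1, P.scope_sub c hc w.2⟩
        ((P.sub s (hS s hsS)).scope_sub c hcs w.2)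
    rw [this]
    exact hsub

end Aux

/-- Let `S` be a subproblem decomposition of `P = ⟨V, C⟩`,
let `Q_S` be the instance whose constraints are the subproblems of `S`, and
assume every `T ∈ S` with `iv(T) = ∅` has `sol(T) ≠ ∅`.  Let `(Q_S)_CL` be the
classic instance whose constraints are the induced table constraints `ic(T)`
for `T ∈ S`.  Then `(Q_S)_CL` has the same hypergraph as the decomposition `S`
(one hyperedge `V_T` per `T ∈ S`), and `(Q_S)_CL` has a solution iff `P`
does. -/
theorem QSCL_spec (P : CSP ι α) (S : Set (Set (Constraint ι α)))
    (hS : ∀ s ∈ S, s ⊆ P.cons) (hcov : ∀ c ∈ P.cons, ∃ s ∈ S, c ∈ s)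
    (star : α) (hstar : ∀ v, star ∉ P.dom v)
    (hne : ∀ s (hs : s ∈ S), ivS S s = ∅ → (P.sub s (hS s hs)).sol.Nonempty) :
    (QSCL P S hS hcov star).hyp = (⋃ s ∈ S, subVars s, subVars '' S) ∧
    ((QSCL P S hS hcov star).sol.Nonempty ↔ P.sol.Nonempty) := by
  classical
  constructor
  · -- hypergraph
    refine Prod.ext ?_ ?_
    · show P.vars = ⋃ s ∈ S, subVars s
      apply Set.Subset.antisymm
      · intro v hv
        obtain ⟨c, hc, hvc⟩ := P.cover v hv
        obtain ⟨s, hsS, hcs⟩ := hcov c hc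
        exact Set.mem_biUnion hsS (Set.subset_biUnion_of_mem hcs hvc)
      · exact Set.iUnion₂_subset fun s hs => subVars_subset P (hS s hs)
    · show Constraint.scope '' (QSCL P S hS hcov star).cons = subVars '' S
      ext X
      constructor
      · rintro ⟨c, ⟨⟨s, hs⟩, rfl⟩, rfl⟩
        exact ⟨s, hs, rfl⟩
      · rintro ⟨s, hs, rfl⟩
        exact ⟨icS P S hS hcov star s hs, ⟨⟨s, hs⟩, rfl⟩, rfl⟩
  · constructor
    · -- QSCL solvable → P solvable
      rintro ⟨φ, hφ⟩
      have hchoice : ∀ s (hs : s ∈ S), ∃ σ : ↥(subVars s) → α,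
          σ ∈ (P.sub s (hS s hs)).sol ∧
          ∀ v : ↥(subVars s), v.1 ∈ ivS S s →
            σ v = φ ⟨v.1, subVars_subset P (hS s hs) v.2⟩ := by
        intro s hs
        by_cases hiv : ivS S s = ∅
        · obtain ⟨σ, hσ⟩ := hne s hs hiv
          exact ⟨σ, hσ, fun v hv => absurd (hiv ▸ hv) (Set.notMem_empty _)⟩
        · have hsat := hφ.2 (icS P S hS hcov star s hs) ⟨⟨s, hs⟩, rfl⟩
          obtain ⟨θs, hθs, heq⟩ := hsat
          -- the projected instance contains the projection of `subC s`
          have hivne : ((P.subC s (hS s hs)).scope ∩ ivS S s).Nonempty := by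
            obtain ⟨x, hx⟩ := Set.nonempty_iff_ne_empty.2 hiv
            exact ⟨x, ivS_subset_subVars S s hx, hx⟩
          have hmem : (P.subC s (hS s hs)).proj (ivS S s) ∈
              ((P.QS S hS hcov).proj (ivS S s)
                (ivS_subset_vars P hS hs)).cons :=
            ⟨P.subC s (hS s hs), ⟨⟨⟨s, hs⟩, rfl⟩, hivne⟩, rfl⟩
          have hsat2 := hθs.2 _ hmem
          obtain ⟨σ, hσ, hσeq⟩ := hsat2
          refine ⟨σ, hσ, ?_⟩
          intro v hv
          have e1 : σ v = θs ⟨v.1, hv⟩ := by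
            have := congrFun hσeq ⟨v.1, v.2, hv⟩
            exact this
          have e2 := congrFun heq v
          rw [e1]
          simp only [restrictA] at e2
          rw [e2, dif_pos hv]
      choose Sg hSgsol hSgphi using hchoice
      refine sol_glue P S hS hcov Sg hSgsol ?_
      intro s hs v h t ht hvt h'
      rw [hSgphi s hs v h, hSgphi t ht ⟨v.1, hvt⟩ h']
    · -- P solvable → QSCL solvable
      rintro ⟨θ, hθ⟩
      set IV : Set ι := {v | ∃ s ∈ S, ∃ t ∈ S, s ≠ t ∧
        v ∈ subVars s ∧ v ∈ subVars t} with hIV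
      have hIViv : ∀ s (hs : s ∈ S) (v : ι), v ∈ subVars s →
          (v ∈ ivS S s ↔ v ∈ IV) := by
        intro s hs v hv
        constructor
        · intro h
          obtain ⟨t, ht, hv1, hv2⟩ := Set.mem_iUnion₂.mp h
          exact ⟨s, hs, t, ht.1, fun e => ht.2 (Set.mem_singleton_iff.2 e.symm),
            hv1, hv2⟩
        · rintro ⟨t, ht, t', ht', htt', hv1, hv2⟩
          by_cases hts : t = s
          · subst hts
            exact mem_ivS' ht' (fun e => htt' e.symm) hv hv2
          · exact mem_ivS' ht hts hv hv1
      refine ⟨fun v => if v.1 ∈ IV then θ v else star, ?_, ?_⟩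
      · intro v
        dsimp only
        split
        · exact Set.mem_insert_iff.2 (Or.inr (hθ.1 v))
        · exact Set.mem_insert _ _
      · rintro c ⟨⟨s, hs⟩, rfl⟩
        refine ⟨restrictA (ivS_subset_vars P hS hs) θ,
          ⟨fun v => hθ.1 ⟨v.1, ivS_subset_vars P hS hs v.2⟩, ?_⟩, ?_⟩
        · rintro c' ⟨c0, ⟨⟨⟨t, ht⟩, rfl⟩, hnem⟩, rfl⟩
          refine ⟨restrictA (subVars_subset P (hS t ht)) θ,
            sol_restrict P (hS t ht) hθ, rfl⟩
        · funext v
          simp only [restrictA]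
          by_cases h : v.1 ∈ ivS S s
          · rw [dif_pos h, if_pos ((hIViv s hs v.1 v.2).1 h)]
            rfl
          · rw [dif_neg h, if_neg (fun hI => h ((hIViv s hs v.1 v.2).2 hI))]
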